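/- arXiv:1007.3339 — 6 statements merged into one kernel-verified Lean document; each statement's English description precedes it below -/
import Mathlib

section
/- Let Γ be a strongly regular graph with μ = 1, so that there exist positive integers r and s such that the local graph of each vertex is the disjoint union of r copies of an s-clique (so Γ has v = 1 + rs + s²r(r−1) vertices, degree k = rs, and λ = s − 1). Then s + 1 ≤ r. -/
/-!
Let `u ≁ w` and let `x` be their unique common neighbour. The neighbourhood of `u` cannot be a
single clique (otherwise the `k` neighbours of `x` would all lie in `{u} ∪ N(u)`, missing `w`),
so some local clique `C` at `u` avoids `x`; then `L = {u} ∪ C` is a clique of size `λ + 2 = s + 1`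
containing no neighbour of `w`. Since `λ = |L| - 2`, a vertex outside `L` has at most one
neighbour in `L`. Sending `q ∈ L` to the unique common neighbour `c q` of `w` and `q` gives `s + 1`
pairwise distinct and nonadjacent neighbours of `w`: if `c q ~ c q'` then `q` and `c q'` would have
the two common neighbours `q'` and `c q`. They therefore lie in distinct local cliques at `w`.
-/

open Finset

namespace SimpleGraph

variable {V : Type*} [Fintype V] {G : SimpleGraph V} [DecidableRel G.Adj]
  {n k ℓ μ : ℕ}

lemma card_le_card_commonNeighbors [DecidableEq V] {a b : V} {S : Finset V}
    (hS : ∀ z ∈ S, G.Adj a z ∧ G.Adj b z) : #S ≤ Fintype.card (G.commonNeighbors a b) := by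
  rw [← Set.toFinset_card]
  exact card_le_card fun z hz => Set.mem_toFinset.mpr (G.mem_commonNeighbors.mpr (hS z hz))

lemma IsSRGWith.exists_commonNeighbor (h : G.IsSRGWith n k ℓ 1) {a b : V} (hab : a ≠ b)
    (hadj : ¬G.Adj a b) : ∃ z, G.Adj a z ∧ G.Adj b z := by
  obtain ⟨⟨z, hz⟩⟩ := Fintype.card_pos_iff.mp (h.of_not_adj hab hadj).ge
  exact ⟨z, (G.mem_commonNeighbors).mp hz⟩

lemma IsSRGWith.commonNeighbor_unique [DecidableEq V] (h : G.IsSRGWith n k ℓ 1) {a b y z : V}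
    (hab : a ≠ b) (hadj : ¬G.Adj a b) (hay : G.Adj a y) (hby : G.Adj b y) (haz : G.Adj a z)
    (hbz : G.Adj b z) : y = z := by
  by_contra hyz
  have := card_le_card_commonNeighbors (S := {y, z}) (a := a) (b := b) fun c hc => by
    rcases mem_insert.mp hc with rfl | hc
    · exact ⟨hay, hby⟩
    rw [mem_singleton.mp hc]
    exact ⟨haz, hbz⟩
  rw [card_pair hyz, h.of_not_adj hab hadj] at this
  omega

/-- Two vertices of `L` already have the other `ℓ` vertices of `L` as common neighbours. -/
lemma IsSRGWith.eq_of_adj_of_adj_of_isClique [DecidableEq V] (h : G.IsSRGWith n k ℓ μ)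
    {L : Finset V} (hL : G.IsClique (L : Set V)) (hcard : #L = ℓ + 2) {z a b : V} (hz : z ∉ L)
    (ha : a ∈ L) (hb : b ∈ L) (hza : G.Adj z a) (hzb : G.Adj z b) : a = b := by
  by_contra hab
  have hcommon : ∀ c ∈ insert z ((L.erase a).erase b), G.Adj a c ∧ G.Adj b c := by
    simp only [mem_insert, mem_erase]
    rintro c (rfl | ⟨hcb, hca, hc⟩)
    · exact ⟨hza.symm, hzb.symm⟩
    · exact ⟨hL ha hc (Ne.symm hca), hL hb hc (Ne.symm hcb)⟩
  have := card_le_card_commonNeighbors hcommon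
  rw [h.of_adj a b (hL ha hb hab), card_insert_of_notMem fun hz' => hz (mem_of_mem_erase
    (mem_of_mem_erase hz')), card_erase_of_mem (mem_erase.mpr ⟨Ne.symm hab, hb⟩),
    card_erase_of_mem ha] at this
  omega

lemma IsSRGWith.exists_isIndepSet_of_isClique [DecidableEq V] (h : G.IsSRGWith n k ℓ 1)
    {L : Finset V} (hL : G.IsClique (L : Set V)) (hcard : #L = ℓ + 2) {p : V} (hpL : p ∉ L)
    (hp : ∀ q ∈ L, ¬G.Adj p q) :
    ∃ S ⊆ G.neighborFinset p, G.IsIndepSet (S : Set V) ∧ #S = #L := by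
  have hpq : ∀ q ∈ L, p ≠ q := fun q hq hpq => hpL (hpq ▸ hq)
  choose! c hc using fun q (hq : q ∈ L) => h.exists_commonNeighbor (hpq q hq) (hp q hq)
  have hcL : ∀ q ∈ L, c q ∉ L := fun q hq hcq => hp _ hcq (hc q hq).1
  have hc_ne : ∀ q ∈ L, ∀ q' ∈ L, q ≠ q' → c q ≠ c q' := fun q hq q' hq' hne hcc =>
    hne (h.eq_of_adj_of_adj_of_isClique hL hcard (hcL q hq) hq hq' (hc q hq).2.symm
      (hcc ▸ (hc q' hq').2.symm))
  have hc_not_adj : ∀ q ∈ L, ∀ q' ∈ L, q ≠ q' → ¬G.Adj (c q) (c q') := by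
    intro q hq q' hq' hne hadj
    have hq_not_adj : ¬G.Adj q (c q') := fun hqc =>
      hc_ne q hq q' hq' hne (h.commonNeighbor_unique (hpq q hq) (hp q hq) (hc q hq).1
        (hc q hq).2 (hc q' hq').1 hqc)
    have hq_ne : q ≠ c q' := fun hqc => hcL q' hq' (hqc ▸ hq)
    -- `q'` and `c q` are two distinct common neighbours of the nonadjacent `q` and `c q'`
    exact hcL q hq (h.commonNeighbor_unique hq_ne hq_not_adj (hL hq hq' hne) (hc q' hq').2.symm
      (hc q hq).2 hadj.symm ▸ hq')
  refine ⟨L.image c, fun z hz => ?_, fun y hy z hz hyz => ?_, card_image_of_injOn ?_⟩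
  · obtain ⟨q, hq, rfl⟩ := mem_image.mp hz
    exact (G.mem_neighborFinset _ _).mpr (hc q hq).1
  · obtain ⟨q, hq, rfl⟩ := mem_image.mp (mem_coe.mp hy)
    obtain ⟨q', hq', rfl⟩ := mem_image.mp (mem_coe.mp hz)
    exact hc_not_adj q hq q' hq' fun hqq => hyz (hqq ▸ rfl)
  · exact fun q hq q' hq' hcc => by_contra fun hne => hc_ne q hq q' hq' hne hcc

section LocalCliques

variable {ι : Type*} {u : V} {f : V → ι}

def IsLocalCliqueLabeling (G : SimpleGraph V) [DecidableRel G.Adj] (u : V) (f : V → ι) : Prop :=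
  ∀ y ∈ G.neighborFinset u, ∀ z ∈ G.neighborFinset u, (G.Adj y z ↔ (f y = f z ∧ y ≠ z))

lemma isClique_insert_filter_neighborFinset [DecidableEq V] [DecidableEq ι]
    (hf : G.IsLocalCliqueLabeling u f) (i : ι) :
    G.IsClique ((insert u ((G.neighborFinset u).filter (f · = i)) : Finset V) : Set V) := by
  rw [coe_insert, isClique_insert]
  refine ⟨fun y hy z hz hyz => ?_, fun y hy hne => ((G.mem_neighborFinset _ _).mp
    (mem_filter.mp hy).1)⟩
  obtain ⟨hyu, hfy⟩ := mem_filter.mp hy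
  obtain ⟨hzu, hfz⟩ := mem_filter.mp hz
  exact (hf y hyu z hzu).mpr ⟨hfy.trans hfz.symm, hyz⟩

lemma card_le_of_isIndepSet [Fintype ι] (hf : G.IsLocalCliqueLabeling u f)
    {S : Finset V} (hSu : S ⊆ G.neighborFinset u)
    (hS : G.IsIndepSet (S : Set V)) : #S ≤ Fintype.card ι := by
  rw [← card_univ]
  refine card_le_card_of_injOn f (fun _ _ => mem_univ _) fun y hy z hz hfyz => ?_
  by_contra hyz
  exact hS hy hz hyz ((hf y (hSu hy) z (hSu hz)).mpr ⟨hfyz, hyz⟩)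

/-- If the neighbourhood of `u` were a single clique, the `k` neighbours of a neighbour `x` of `u`
would be `u` and the rest of `N(u)`. -/
lemma IsRegularOfDegree.exists_apply_ne [DecidableEq V] (hG : G.IsRegularOfDegree k)
    (hf : G.IsLocalCliqueLabeling u f) {x w : V}
    (hux : G.Adj u x) (hxw : G.Adj x w) (hwu : w ≠ u) (huw : ¬G.Adj u w) :
    ∃ y ∈ G.neighborFinset u, f y ≠ f x := by
  by_contra! hfx
  have hsub : insert u ((G.neighborFinset u).erase x) ⊆ G.neighborFinset x := by
    intro y hy
    rcases mem_insert.mp hy with rfl | hy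
    · exact (G.mem_neighborFinset _ _).mpr hux.symm
    obtain ⟨hyx, hy⟩ := mem_erase.mp hy
    have hx := (G.mem_neighborFinset _ _).mpr hux
    exact (G.mem_neighborFinset _ _).mpr
      ((hf x hx y hy).mpr ⟨(hfx y hy).symm, Ne.symm hyx⟩)
  have hcard : #(G.neighborFinset x) ≤ #(insert u ((G.neighborFinset u).erase x)) := by
    rw [card_insert_of_notMem fun hu => G.notMem_neighborFinset_self u (mem_of_mem_erase hu),
      card_erase_of_mem ((G.mem_neighborFinset _ _).mpr hux),
      G.card_neighborFinset_eq_degree, G.card_neighborFinset_eq_degree, hG u, hG x]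
    omega
  have hw := eq_of_subset_of_card_le hsub hcard ▸ (G.mem_neighborFinset _ _).mpr hxw
  rcases mem_insert.mp hw with hw | hw
  · exact hwu hw
  · exact huw ((G.mem_neighborFinset _ _).mp (mem_of_mem_erase hw))

end LocalCliques

end SimpleGraph

open SimpleGraph

theorem stmt_0_general {V : Type*} [Fintype V] [DecidableEq V]
    (G : SimpleGraph V) [DecidableRel G.Adj]
    (v k l r s : ℕ) (hs : 0 < s)
    (hsrg : G.IsSRGWith v k l 1)
    (hnc : ∃ u w : V, u ≠ w ∧ ¬G.Adj u w)
    (hl : l = s - 1)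
    (hlocal : ∀ x : V, ∃ f : V → Fin r,
      (∀ y ∈ G.neighborFinset x, ∀ z ∈ G.neighborFinset x,
        (G.Adj y z ↔ (f y = f z ∧ y ≠ z))) ∧
      ∀ i : Fin r, ((G.neighborFinset x).filter (fun y => f y = i)).card = s) :
    s + 1 ≤ r := by
  obtain ⟨u, w, huw, hnadj⟩ := hnc
  obtain ⟨x, hux, hwx⟩ := hsrg.exists_commonNeighbor huw hnadj
  obtain ⟨f, hf, hcard⟩ := hlocal u
  obtain ⟨y, -, hyx⟩ := hsrg.regular.exists_apply_ne hf hux hwx.symm huw.symm hnadj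
  set L := insert u ((G.neighborFinset u).filter (f · = f y))
  have hLcard : #L = l + 2 := by
    rw [card_insert_of_notMem fun hu => G.notMem_neighborFinset_self u (mem_filter.mp hu).1,
      hcard, hl]
    omega
  have hwL : ∀ q ∈ L, ¬G.Adj w q := by
    rintro q hq hwq
    rcases mem_insert.mp hq with rfl | hq
    · exact hnadj hwq.symm
    obtain ⟨huq, hfq⟩ := mem_filter.mp hq
    have hqx :=
      hsrg.commonNeighbor_unique huw hnadj ((G.mem_neighborFinset _ _).mp huq) hwq hux hwx
    exact hyx (hqx ▸ hfq.symm)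
  have hw_notMem : w ∉ L := fun hw => (mem_insert.mp hw).elim huw.symm
    fun hw => hnadj ((G.mem_neighborFinset _ _).mp (mem_filter.mp hw).1)
  obtain ⟨S, hSw, hS, hSL⟩ := hsrg.exists_isIndepSet_of_isClique
    (isClique_insert_filter_neighborFinset hf _) hLcard hw_notMem hwL
  obtain ⟨fw, hfw, -⟩ := hlocal w
  have := card_le_of_isIndepSet hfw hSw hS
  rw [Fintype.card_fin, hSL, hLcard, hl] at this
  omega

/-- Lemma 2.1: if `Γ` is a (noncomplete) strongly regular graph with `μ = 1`,
so that the local graph of each vertex is a disjoint union of `r` copies of an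
`s`-clique (whence `v = 1 + rs + s²r(r-1)`, `k = rs`, `λ = s - 1`),
then `s + 1 ≤ r`. -/
theorem stmt_0 {V : Type*} [Fintype V] [DecidableEq V]
    (G : SimpleGraph V) [DecidableRel G.Adj]
    (v k l r s : ℕ) (hr : 0 < r) (hs : 0 < s)
    (hsrg : G.IsSRGWith v k l 1)
    (hnc : ∃ u w : V, u ≠ w ∧ ¬G.Adj u w)
    (hv : v = 1 + r * s + s ^ 2 * r * (r - 1)) (hk : k = r * s) (hl : l = s - 1)
    (hlocal : ∀ x : V, ∃ f : V → Fin r,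
      (∀ y ∈ G.neighborFinset x, ∀ z ∈ G.neighborFinset x,
        (G.Adj y z ↔ (f y = f z ∧ y ≠ z))) ∧
      ∀ i : Fin r, ((G.neighborFinset x).filter (fun y => f y = i)).card = s) :
    s + 1 ≤ r :=
  stmt_0_general G v k l r s hs hsrg hnc hl hlocal
end

section
/- Let Γ be an amply regular graph with parameters (v,k,λ,μ). Fix a vertex x and suppose y₁,…,y_{c'} (c' ≥ 2) are pairwise nonadjacent vertices in the neighbourhood of x, and suppose each μ-graph of Γ that is contained in a neighbourhood Γ₁(x) meets Γ₁(x) in at most μ − 1 vertices (i.e., for nonadjacent y_i, y_j, |Γ₁(x) ∩ Γ₁(y_i) ∩ Γ₁(y_j)| ≤ μ − 1). Then k ≥ c'(λ+1) − C(c',2)(μ−1), equivalently μ − 1 ≥ (c'(λ+1) − k)/C(c',2). -/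
/-!
Each `yᵢ` contributes the set `Γ₁(x) ∩ (Γ₁(yᵢ) ∪ {yᵢ})` of `λ + 1` neighbours of `x`. Two of these
sets meet only inside `Γ₁(x) ∩ Γ₁(yᵢ) ∩ Γ₁(yⱼ)`, since `yᵢ ≠ yⱼ` are nonadjacent, so they overlap
in at most `μ - 1` vertices. The second Bonferroni inequality then bounds `c'(λ + 1)` by the size
of their union, at most `k`, plus `C(c', 2)(μ - 1)`.
-/

open Finset

namespace Finset

theorem sum_card_le_card_biUnion_add_choose_mul {ι α : Type*} [DecidableEq ι] [DecidableEq α]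
    (A : ι → Finset α) {m : ℕ} (s : Finset ι)
    (hA : (s : Set ι).Pairwise fun i j => #(A i ∩ A j) ≤ m) :
    ∑ i ∈ s, #(A i) ≤ #(s.biUnion A) + (#s).choose 2 * m := by
  induction s using Finset.induction_on with
  | empty => simp
  | insert a t ha ih =>
    rw [coe_insert, Set.pairwise_insert] at hA
    have hmeet : #(A a ∩ t.biUnion A) ≤ #t * m := by
      rw [inter_biUnion]
      calc #(t.biUnion fun i => A a ∩ A i) ≤ ∑ i ∈ t, #(A a ∩ A i) := card_biUnion_le
        _ ≤ ∑ _i ∈ t, m :=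
            sum_le_sum fun i hi => (hA.2 i hi fun h => ha (h ▸ hi)).1
        _ = #t * m := by rw [sum_const, smul_eq_mul]
    have hunion := card_union_add_card_inter (A a) (t.biUnion A)
    have hchoose : (#t + 1).choose 2 = (#t).choose 2 + #t := by
      rw [Nat.choose_succ_succ, Nat.choose_one_right, add_comm]
    rw [sum_insert ha, biUnion_insert, card_insert_of_notMem ha, hchoose, add_mul]
    have hsum := ih hA.1
    omega

end Finset

namespace SimpleGraph

variable {V : Type*} [DecidableEq V] (G : SimpleGraph V) [DecidableRel G.Adj] [Fintype V]

theorem card_neighborFinset_inter_insert {x y : V} (h : G.Adj x y) :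
    #(G.neighborFinset x ∩ insert y (G.neighborFinset y)) =
      #(G.neighborFinset x ∩ G.neighborFinset y) + 1 := by
  rw [inter_insert_of_mem ((G.mem_neighborFinset x y).2 h), card_insert_of_notMem]
  simp

theorem neighborFinset_inter_insert_inter_subset {x y y' : V} (hne : y ≠ y') (hy : ¬G.Adj y y') :
    G.neighborFinset x ∩ insert y (G.neighborFinset y) ∩
        (G.neighborFinset x ∩ insert y' (G.neighborFinset y')) ⊆
      G.neighborFinset x ∩ G.neighborFinset y ∩ G.neighborFinset y' := by
  intro z
  simp only [mem_inter, mem_insert, mem_neighborFinset]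
  rintro ⟨⟨hxz, rfl | hyz⟩, -, rfl | hy'z⟩
  · exact absurd rfl hne
  · exact absurd hy'z.symm hy
  · exact absurd hyz hy
  · exact ⟨⟨hxz, hyz⟩, hy'z⟩

end SimpleGraph

theorem stmt_2_general {V : Type*} [Fintype V] [DecidableEq V]
    (G : SimpleGraph V) [DecidableRel G.Adj]
    (k lam mu : ℕ)
    (hreg : G.IsRegularOfDegree k)
    (hlam : ∀ u w : V, G.Adj u w →
      (G.neighborFinset u ∩ G.neighborFinset w).card = lam)
    (x : V) (c' : ℕ)
    (y : Fin c' → V) (hinj : Function.Injective y)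
    (hnbr : ∀ i, G.Adj x (y i))
    (hcoc : ∀ i j, i ≠ j → ¬G.Adj (y i) (y j))
    (hmub : ∀ i j, i ≠ j →
      (G.neighborFinset x ∩ G.neighborFinset (y i) ∩ G.neighborFinset (y j)).card
        ≤ mu - 1) :
    k + c'.choose 2 * (mu - 1) ≥ c' * (lam + 1) := by
  set A : Fin c' → Finset V :=
    fun i => G.neighborFinset x ∩ insert (y i) (G.neighborFinset (y i))
  have hcard : ∀ i, #(A i) = lam + 1 := fun i => by
    rw [G.card_neighborFinset_inter_insert (hnbr i), hlam x (y i) (hnbr i)]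
  have hmeet : ∀ i j, i ≠ j → #(A i ∩ A j) ≤ mu - 1 :=
    fun i j hij => (card_le_card <| G.neighborFinset_inter_insert_inter_subset
      (hinj.ne hij) (hcoc i j hij)).trans (hmub i j hij)
  have hunion : #(univ.biUnion A) ≤ k :=
    (card_le_card <| biUnion_subset.2 fun i _ => inter_subset_left).trans (hreg x).le
  have hbonferroni := sum_card_le_card_biUnion_add_choose_mul A univ fun i _ j _ => hmeet i j
  simp only [hcard, sum_const, card_univ, Fintype.card_fin, smul_eq_mul] at hbonferroni
  omega

/-- The inclusion–exclusion counting in Proposition 4.1 (Koolen–Park bound):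
if `Γ` is amply regular with parameters `(v, k, λ, μ)`, `x` is a vertex,
`y₁, …, y_{c'}` (`c' ≥ 2`) are pairwise nonadjacent neighbours of `x`, and
for all `i ≠ j` we have `|Γ₁(x) ∩ Γ₁(yᵢ) ∩ Γ₁(yⱼ)| ≤ μ - 1`, then
`k ≥ c'(λ+1) - C(c',2)(μ-1)`, stated additively as
`k + C(c',2)(μ-1) ≥ c'(λ+1)`. -/
theorem stmt_2 {V : Type*} [Fintype V] [DecidableEq V]
    (G : SimpleGraph V) [DecidableRel G.Adj]
    (v k lam mu : ℕ) (hv : v = Fintype.card V) (hmu : 1 ≤ mu)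
    (hreg : G.IsRegularOfDegree k)
    (hlam : ∀ u w : V, G.Adj u w →
      (G.neighborFinset u ∩ G.neighborFinset w).card = lam)
    (hamu : ∀ u w : V, u ≠ w → ¬G.Adj u w →
      (G.neighborFinset u ∩ G.neighborFinset w).Nonempty →
      (G.neighborFinset u ∩ G.neighborFinset w).card = mu)
    (x : V) (c' : ℕ) (hc' : 2 ≤ c')
    (y : Fin c' → V) (hinj : Function.Injective y)
    (hnbr : ∀ i, G.Adj x (y i))
    (hcoc : ∀ i j, i ≠ j → ¬G.Adj (y i) (y j))
    (hmub : ∀ i j, i ≠ j →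
      (G.neighborFinset x ∩ G.neighborFinset (y i) ∩ G.neighborFinset (y j)).card
        ≤ mu - 1) :
    k + c'.choose 2 * (mu - 1) ≥ c' * (lam + 1) :=
  stmt_2_general G k lam mu hreg hlam x c' y hinj hnbr hcoc hmub
end

section
/- Let Γ be an amply regular graph with parameters (v,k,λ,μ), and let c ≥ 2 be maximal such that for each vertex x and every pair of nonadjacent vertices y,z in Γ₁(x) there exists a c-coclique in Γ₁(x) containing y and z. If μ − 1 = max{(c'(λ+1) − k)/C(c',2) : 2 ≤ c' ≤ c}, then Γ is a Terwilliger graph: every μ-graph of Γ is a clique of size μ. -/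
/-!
Suppose a μ-graph of `u, w` contains a non-edge `{a, b}`, and let `T ∋ a, b` be a coclique of
size `c'` in `Γ(u)`. The `c'` sets `{t} ∪ ((Γ(u) ∪ {w}) ∩ Γ(t))`, `t ∈ T`, lie in `Γ(u) ∪ {w}`,
have at least `λ + 1` elements, and those of `a` and `b` one more because of `w`; two of them
meet inside a μ-graph minus `u`. The Bonferroni inequality then gives
`c'(λ + 1) + 2 ≤ k + 1 + C(c', 2)(μ - 1)`, so `(c'(λ + 1) - k) / C(c', 2) < μ - 1` for every
`2 ≤ c' ≤ c`, contradicting the assumed equality.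
-/

open Finset

theorem Finset.two_mul_sum_card_le_two_mul_card_biUnion_add_sum_card_inter
    {ι α : Type*} [DecidableEq ι] [DecidableEq α] (A : ι → Finset α) (T : Finset ι) :
    2 * ∑ t ∈ T, #(A t) ≤ 2 * #(T.biUnion A) + ∑ p ∈ T.offDiag, #(A p.1 ∩ A p.2) := by
  induction T using Finset.induction_on with
  | empty => simp
  | @insert a s ha ih =>
    have hoffDiag : ∑ p ∈ (insert a s).offDiag, #(A p.1 ∩ A p.2) =
        ∑ p ∈ s.offDiag, #(A p.1 ∩ A p.2) + 2 * ∑ t ∈ s, #(A a ∩ A t) := by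
      rw [offDiag_insert ha, sum_union, sum_union, sum_product, sum_product]
      · simp [inter_comm, two_mul, add_assoc]
      all_goals simp only [disjoint_left]; aesop
    have hunion := card_union_add_card_inter (A a) (s.biUnion A)
    have hinter : #(A a ∩ s.biUnion A) ≤ ∑ t ∈ s, #(A a ∩ A t) := by
      rw [inter_biUnion]; exact card_biUnion_le
    rw [sum_insert ha, biUnion_insert, hoffDiag]
    omega

namespace SimpleGraph

variable {V : Type*} [Fintype V] [DecidableEq V] (G : SimpleGraph V) [DecidableRel G.Adj]

theorem two_mul_sum_card_insert_inter_neighborFinset_le {M T : Finset V} (hTM : T ⊆ M)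
    (hT : G.IsIndepSet T) :
    2 * ∑ t ∈ T, #(insert t (M ∩ G.neighborFinset t)) ≤
      2 * #M + ∑ p ∈ T.offDiag, #(M ∩ (G.neighborFinset p.1 ∩ G.neighborFinset p.2)) := by
  refine (two_mul_sum_card_le_two_mul_card_biUnion_add_sum_card_inter _ T).trans
    (add_le_add ?_ (sum_le_sum fun ⟨s, t⟩ hp => card_le_card ?_))
  · gcongr
    exact biUnion_subset.2 fun t ht => insert_subset (hTM ht) inter_subset_left
  · obtain ⟨hs, ht, hst⟩ := mem_offDiag.1 hp
    have hnst : ¬G.Adj s t := hT hs ht hst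
    intro x hx
    simp only [mem_inter, mem_insert, mem_neighborFinset] at hx ⊢
    rcases hx with ⟨rfl | hxs, rfl | hxt⟩
    · exact absurd rfl hst
    · exact absurd hxt.2.symm hnst
    · exact absurd hxs.2 hnst
    · exact ⟨hxs.1, hxs.2, hxt.2⟩

theorem two_mul_card_mul_add_two_le {k lam mu : ℕ} {u w a b : V} {T : Finset V}
    (hdeg : G.degree u ≤ k)
    (hlam : ∀ t ∈ T, lam ≤ #(G.neighborFinset u ∩ G.neighborFinset t))
    (hmu : ∀ s ∈ T, ∀ t ∈ T, s ≠ t → #(G.neighborFinset s ∩ G.neighborFinset t) ≤ mu)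
    (huw : u ≠ w) (hnadj : ¬G.Adj u w) (hTu : T ⊆ G.neighborFinset u) (hT : G.IsIndepSet T)
    (ha : a ∈ T) (hb : b ∈ T) (hab : a ≠ b) (hwa : G.Adj w a) (hwb : G.Adj w b) :
    2 * (#T * (lam + 1) + 2) ≤ 2 * (k + 1) + #T.offDiag * (mu - 1) := by
  set M := insert w (G.neighborFinset u)
  have hM : #M ≤ k + 1 := (card_insert_le _ _).trans (by simpa using hdeg)
  have hsize : ∀ t ∈ T,
      lam + 1 + (if t ∈ ({a, b} : Finset V) then 1 else 0) ≤
        #(insert t (M ∩ G.neighborFinset t)) := by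
    intro t ht
    rw [card_insert_of_notMem (by simp), add_right_comm]
    gcongr
    split_ifs with htab
    · have hwt : G.Adj w t := by
        rcases mem_insert.1 htab with rfl | htb
        · exact hwa
        · exact mem_singleton.1 htb ▸ hwb
      rw [insert_inter_of_mem (by simpa using hwt.symm), card_insert_of_notMem (by simp [hnadj])]
      exact Nat.add_le_add_right (hlam t ht) 1
    · exact (hlam t ht).trans (card_le_card (inter_subset_inter_right (subset_insert _ _)))
  have hpair : ∀ p ∈ T.offDiag, #(M ∩ (G.neighborFinset p.1 ∩ G.neighborFinset p.2)) ≤ mu - 1 := by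
    rintro ⟨s, t⟩ hp
    obtain ⟨hs, ht, hst⟩ := mem_offDiag.1 hp
    have hu : u ∈ G.neighborFinset s ∩ G.neighborFinset t := by
      simpa [adj_comm] using And.intro (hTu hs) (hTu ht)
    calc #(M ∩ (G.neighborFinset s ∩ G.neighborFinset t))
        ≤ #((G.neighborFinset s ∩ G.neighborFinset t).erase u) := by
          refine card_le_card fun x hx => mem_erase.2 ⟨?_, (mem_inter.1 hx).2⟩
          rintro rfl
          simp [M, huw] at hx
      _ ≤ mu - 1 := by rw [card_erase_of_mem hu]; exact Nat.sub_le_sub_right (hmu s hs t ht hst) 1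
  have habT : ({a, b} : Finset V) ⊆ T := insert_subset ha (singleton_subset_iff.2 hb)
  have hsum :
      ∑ t ∈ T, (lam + 1 + if t ∈ ({a, b} : Finset V) then 1 else 0) = #T * (lam + 1) + 2 := by
    rw [sum_add_distrib, sum_const, smul_eq_mul, sum_boole, filter_mem_eq_inter,
      inter_eq_right.2 habT, card_pair hab, Nat.cast_ofNat]
  calc 2 * (#T * (lam + 1) + 2)
      = 2 * ∑ t ∈ T, (lam + 1 + if t ∈ ({a, b} : Finset V) then 1 else 0) := by rw [hsum]
    _ ≤ 2 * ∑ t ∈ T, #(insert t (M ∩ G.neighborFinset t)) := by gcongr with t ht; exact hsize t ht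
    _ ≤ 2 * #M + ∑ p ∈ T.offDiag, #(M ∩ (G.neighborFinset p.1 ∩ G.neighborFinset p.2)) :=
      G.two_mul_sum_card_insert_inter_neighborFinset_le (hTu.trans (subset_insert _ _)) hT
    _ ≤ 2 * (k + 1) + #T.offDiag * (mu - 1) := by
      gcongr
      simpa using sum_le_card_nsmul _ _ _ hpair

theorem card_mul_sub_div_choose_two_lt {k lam mu : ℕ} {u w a b : V} {T : Finset V}
    (hdeg : G.degree u ≤ k)
    (hlam : ∀ t ∈ T, lam ≤ #(G.neighborFinset u ∩ G.neighborFinset t))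
    (hmu : ∀ s ∈ T, ∀ t ∈ T, s ≠ t → #(G.neighborFinset s ∩ G.neighborFinset t) ≤ mu)
    (huw : u ≠ w) (hnadj : ¬G.Adj u w) (hTu : T ⊆ G.neighborFinset u) (hT : G.IsIndepSet T)
    (ha : a ∈ T) (hb : b ∈ T) (hab : a ≠ b) (hwa : G.Adj w a) (hwb : G.Adj w b) :
    ((#T : ℚ) * (lam + 1) - k) / ((#T).choose 2 : ℚ) < mu - 1 := by
  have hT2 : 2 ≤ #T := card_pair hab ▸ card_le_card (insert_subset ha (singleton_subset_iff.2 hb))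
  have hmu1 : 1 ≤ mu := by
    refine le_trans (card_pos.2 ⟨u, ?_⟩) (hmu a ha b hb hab)
    simpa [adj_comm] using And.intro (hTu ha) (hTu hb)
  have key := G.two_mul_card_mul_add_two_le hdeg hlam hmu huw hnadj hTu hT ha hb hab hwa hwb
  rw [offDiag_card] at key
  rw [div_lt_iff₀ (Nat.cast_pos.2 (Nat.choose_pos hT2)), Nat.cast_choose_two]
  have := (Nat.cast_le (α := ℚ)).2 key
  push_cast [Nat.cast_sub hmu1, Nat.cast_sub (Nat.le_mul_self #T)] at this
  linarith

end SimpleGraph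

theorem stmt_3_general {V : Type*} [Fintype V] [DecidableEq V]
    (G : SimpleGraph V) [DecidableRel G.Adj]
    (k lam mu : ℕ)
    (hreg : G.IsRegularOfDegree k)
    (hlam : ∀ u w : V, G.Adj u w →
      (G.neighborFinset u ∩ G.neighborFinset w).card = lam)
    (hamu : ∀ u w : V, u ≠ w → ¬G.Adj u w →
      (G.neighborFinset u ∩ G.neighborFinset w).Nonempty →
      (G.neighborFinset u ∩ G.neighborFinset w).card = mu)
    (c : ℕ) (hc2 : 2 ≤ c)
    (hcoc : ∀ x y z : V, G.Adj x y → G.Adj x z → y ≠ z → ¬G.Adj y z →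
      ∃ S : Finset V, S ⊆ G.neighborFinset x ∧ S.card = c ∧ y ∈ S ∧ z ∈ S ∧
        ∀ a ∈ S, ∀ b ∈ S, a ≠ b → ¬G.Adj a b)
    (heq : (mu : ℚ) - 1 =
      (((Finset.Icc 2 c).image
          (fun c' : ℕ => ((c' : ℚ) * (lam + 1) - k) / (c'.choose 2 : ℚ))).max'
        (((Finset.nonempty_Icc).mpr hc2).image _))) :
    ∀ u w : V, u ≠ w → ¬G.Adj u w →
      (G.neighborFinset u ∩ G.neighborFinset w).Nonempty →
      ((G.neighborFinset u ∩ G.neighborFinset w).card = mu ∧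
        ∀ a ∈ G.neighborFinset u ∩ G.neighborFinset w,
          ∀ b ∈ G.neighborFinset u ∩ G.neighborFinset w, a ≠ b → G.Adj a b) := by
  intro u w huw hnadj hne
  refine ⟨hamu u w huw hnadj hne, fun a ha b hb hab => ?_⟩
  by_contra hnab
  simp only [mem_inter, SimpleGraph.mem_neighborFinset] at ha hb
  obtain ⟨S, hSu, hScard, haS, hbS, hS⟩ := hcoc u a b ha.1 hb.1 hab hnab
  have hSind : G.IsIndepSet S := fun x hx y hy => hS x hx y hy
  refine absurd heq (ne_of_gt ((max'_lt_iff _ _).2 (forall_mem_image.2 fun c' hc' => ?_)))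
  obtain ⟨T, habT, hTS, rfl⟩ := exists_subsuperset_card_eq (n := c')
    (insert_subset haS (singleton_subset_iff.2 hbS))
    (by rw [card_pair hab]; exact (mem_Icc.1 hc').1) (by rw [hScard]; exact (mem_Icc.1 hc').2)
  have hTu : T ⊆ G.neighborFinset u := hTS.trans hSu
  refine G.card_mul_sub_div_choose_two_lt (hreg u).le (fun t ht => (hlam u t ?_).ge)
    (fun s hs t ht hst => (hamu s t hst (hSind (hTS hs) (hTS ht) hst) ⟨u, ?_⟩).le) huw hnadj hTu
    (hSind.mono (coe_subset.2 hTS)) (habT (by simp)) (habT (by simp)) hab ha.2 hb.2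
  · simpa using hTu ht
  · simpa [SimpleGraph.adj_comm] using And.intro (hTu hs) (hTu ht)

/-- Proposition 4.1 (Koolen–Park): let `Γ` be amply regular with parameters
`(v, k, λ, μ)` and let `c ≥ 2` be maximal such that for each vertex `x` and
every pair of nonadjacent vertices `y, z ∈ Γ₁(x)` there is a `c`-coclique in
`Γ₁(x)` containing `y, z`.  If equality holds in the μ-bound, i.e.
`μ - 1 = max{(c'(λ+1) - k)/C(c',2) : 2 ≤ c' ≤ c}`, then `Γ` is a Terwilliger
graph: every μ-graph of `Γ` is a clique (of size `μ`). -/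
theorem stmt_3 {V : Type*} [Fintype V] [DecidableEq V]
    (G : SimpleGraph V) [DecidableRel G.Adj]
    (v k lam mu : ℕ) (hv : v = Fintype.card V) (hmu : 1 ≤ mu)
    (hreg : G.IsRegularOfDegree k)
    (hlam : ∀ u w : V, G.Adj u w →
      (G.neighborFinset u ∩ G.neighborFinset w).card = lam)
    (hamu : ∀ u w : V, u ≠ w → ¬G.Adj u w →
      (G.neighborFinset u ∩ G.neighborFinset w).Nonempty →
      (G.neighborFinset u ∩ G.neighborFinset w).card = mu)
    (c : ℕ) (hc2 : 2 ≤ c)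
    (hcoc : ∀ x y z : V, G.Adj x y → G.Adj x z → y ≠ z → ¬G.Adj y z →
      ∃ S : Finset V, S ⊆ G.neighborFinset x ∧ S.card = c ∧ y ∈ S ∧ z ∈ S ∧
        ∀ a ∈ S, ∀ b ∈ S, a ≠ b → ¬G.Adj a b)
    (hcmax : ¬ ∀ x y z : V, G.Adj x y → G.Adj x z → y ≠ z → ¬G.Adj y z →
      ∃ S : Finset V, S ⊆ G.neighborFinset x ∧ S.card = c + 1 ∧ y ∈ S ∧ z ∈ S ∧
        ∀ a ∈ S, ∀ b ∈ S, a ≠ b → ¬G.Adj a b)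
    (heq : (mu : ℚ) - 1 =
      (((Finset.Icc 2 c).image
          (fun c' : ℕ => ((c' : ℚ) * (lam + 1) - k) / (c'.choose 2 : ℚ))).max'
        (((Finset.nonempty_Icc).mpr hc2).image _))) :
    ∀ u w : V, u ≠ w → ¬G.Adj u w →
      (G.neighborFinset u ∩ G.neighborFinset w).Nonempty →
      ((G.neighborFinset u ∩ G.neighborFinset w).card = mu ∧
        ∀ a ∈ G.neighborFinset u ∩ G.neighborFinset w,
          ∀ b ∈ G.neighborFinset u ∩ G.neighborFinset w, a ≠ b → G.Adj a b) :=
  stmt_3_general G k lam mu hreg hlam hamu c hc2 hcoc heq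
end

section
/- There is no strongly regular graph with parameters k = 50, λ = 7, μ = 2, because the roots of x² − 5x − 48 = 0 are not integers, while the non-principal eigenvalues of a strongly regular graph with μ ≠ λ and v > k+1 must be integers (or conjugate irrationals only in the conference graph case, which requires λ = μ − 1). -/
/-!
The adjacency matrix `A` of a strongly regular graph satisfies
`A² = (k - μ) I + (ℓ - μ) A + μ J` and `A J = k J`, hence `(A - k) (A² - (ℓ - μ) A - (k - μ)) = 0`:
every eigenvalue is `k` or a root of `x² - (ℓ - μ) x - (k - μ)`, here `(5 ± √217) / 2`.
As `tr A = 0`, the multiplicities `a, b, c` of `50, (5 + √217) / 2, (5 - √217) / 2` satisfy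
`100 a + 5 (b + c) + (b - c) √217 = 0`, and the irrationality of `√217` forces `a = b = c = 0`,
contradicting `a + b + c = |V| > 0`.
-/

open Polynomial

namespace Matrix

variable {n K : Type*} [Fintype n] [DecidableEq n] [Field K]

theorem eval_eq_zero_of_isRoot_charpoly [Nonempty n] (M : Matrix n n K) {q : K[X]}
    (hq : aeval M q = 0) {θ : K} (hθ : M.charpoly.IsRoot θ) : q.eval θ = 0 := by
  have := spectrum.subset_polynomial_aeval M q ⟨θ, mem_spectrum_of_isRoot_charpoly hθ, rfl⟩
  rwa [hq, spectrum.zero_eq, Set.mem_singleton_iff] at this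

theorem exists_card_eq_add_and_trace_eq_of_isRoot_charpoly [IsAlgClosed K] (M : Matrix n n K)
    {α β γ : K} (hαβ : α ≠ β) (hαγ : α ≠ γ) (hβγ : β ≠ γ)
    (hroot : ∀ θ, M.charpoly.IsRoot θ → θ = α ∨ θ = β ∨ θ = γ) :
    ∃ a b c : ℕ, a + b + c = Fintype.card n ∧ M.trace = a * α + b * β + c * γ := by
  classical
  set S : Finset K := {α, β, γ}
  have hS : ∀ θ ∈ M.charpoly.roots, θ ∈ S := fun θ hθ => by
    simpa [S] using hroot θ (isRoot_of_mem_roots hθ)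
  have hα : α ∉ ({β, γ} : Finset K) := by simp [hαβ, hαγ]
  refine ⟨M.charpoly.roots.count α, M.charpoly.roots.count β, M.charpoly.roots.count γ, ?_, ?_⟩
  · rw [← M.charpoly_natDegree_eq_dim, (IsAlgClosed.splits M.charpoly).natDegree_eq_card_roots,
      ← Multiset.sum_count_eq_card hS, Finset.sum_insert hα, Finset.sum_pair hβγ, add_assoc]
  · rw [trace_eq_sum_roots_charpoly, Finset.sum_multiset_count_of_subset _ S
      (fun θ hθ => hS θ (Multiset.mem_toFinset.mp hθ)), Finset.sum_insert hα,
      Finset.sum_pair hβγ, add_assoc]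
    simp only [nsmul_eq_mul]

end Matrix

namespace SimpleGraph.IsSRGWith

variable {V R : Type*} [Fintype V] {G : SimpleGraph V} [DecidableRel G.Adj]
  {n k ℓ μ : ℕ} [CommRing R]

theorem adjMatrix_mul_of_one (h : G.IsSRGWith n k ℓ μ) :
    G.adjMatrix R * Matrix.of 1 = (k : R) • Matrix.of 1 := by
  ext i j
  simp [adjMatrix_mul_apply, h.regular i]

theorem adjMatrix_sq [DecidableEq V] (h : G.IsSRGWith n k ℓ μ) :
    G.adjMatrix R ^ 2 =
      ((k : R) - μ) • 1 + ((ℓ : R) - μ) • G.adjMatrix R + (μ : R) • Matrix.of 1 := by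
  classical
  have hcompl : Gᶜ.adjMatrix R = Matrix.of 1 - 1 - G.adjMatrix R := by
    rw [← G.one_add_adjMatrix_add_compl_adjMatrix_eq_of_one R,
      G.compl_adjMatrix_eq_adjMatrix_compl R]
    abel
  rw [h.matrix_eq, hcompl]
  simp only [← Nat.cast_smul_eq_nsmul R]
  module

theorem aeval_adjMatrix_eq_zero [DecidableEq V] (h : G.IsSRGWith n k ℓ μ) :
    aeval (G.adjMatrix R)
      ((X - C (k : R)) * (X ^ 2 - C ((ℓ : R) - μ) * X - C ((k : R) - μ))) = 0 := by
  have hquad : G.adjMatrix R ^ 2 - ((ℓ : R) - μ) • G.adjMatrix R - ((k : R) - μ) • 1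
      = (μ : R) • Matrix.of 1 := by
    rw [h.adjMatrix_sq]; abel
  simp only [map_mul, map_sub, map_pow, aeval_X, aeval_C, Algebra.algebraMap_eq_smul_one,
    ← sub_smul, smul_one_mul]
  rw [hquad, mul_smul_comm, sub_mul, h.adjMatrix_mul_of_one,
    smul_mul_assoc, one_mul, sub_self, smul_zero]

theorem eq_or_isRoot_of_isRoot_charpoly {K : Type*} [Field K] [DecidableEq V] [Nonempty V]
    (h : G.IsSRGWith n k ℓ μ) {θ : K} (hθ : (G.adjMatrix K).charpoly.IsRoot θ) :
    θ = k ∨ θ ^ 2 - ((ℓ : K) - μ) * θ - ((k : K) - μ) = 0 := by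
  have := (G.adjMatrix K).eval_eq_zero_of_isRoot_charpoly h.aeval_adjMatrix_eq_zero hθ
  simpa [sub_eq_zero] using this

theorem eq_or_eq_or_eq_of_isRoot_charpoly [DecidableEq V] [Nonempty V]
    (h : G.IsSRGWith n k ℓ μ) (hμk : μ ≤ k) {θ : ℂ} (hθ : (G.adjMatrix ℂ).charpoly.IsRoot θ) :
    θ = k ∨ θ = (((ℓ : ℝ) - μ + √(((ℓ : ℝ) - μ) ^ 2 + 4 * ((k : ℝ) - μ))) / 2 : ℝ) ∨
      θ = (((ℓ : ℝ) - μ - √(((ℓ : ℝ) - μ) ^ 2 + 4 * ((k : ℝ) - μ))) / 2 : ℝ) := by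
  refine (h.eq_or_isRoot_of_isRoot_charpoly hθ).imp_right fun hq => ?_
  set d : ℝ := √(((ℓ : ℝ) - μ) ^ 2 + 4 * ((k : ℝ) - μ))
  have hd : d * d = ((ℓ : ℝ) - μ) ^ 2 + 4 * ((k : ℝ) - μ) := by
    have : (μ : ℝ) ≤ k := by exact_mod_cast hμk
    exact Real.mul_self_sqrt (by positivity)
  have hdisc : discrim (1 : ℂ) (-((ℓ : ℂ) - μ)) (-((k : ℂ) - μ)) = d * d := by
    rw [discrim, ← Complex.ofReal_mul, hd]; push_cast; ring
  have := (quadratic_eq_zero_iff one_ne_zero hdisc θ).mp (by linear_combination hq)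
  push_cast
  convert this using 2 <;> ring

end SimpleGraph.IsSRGWith

theorem Irrational.eq_zero_of_intCast_add_intCast_mul_eq_zero {x : ℝ} (hx : Irrational x)
    {m n : ℤ} (h : (m : ℝ) + n * x = 0) : m = 0 ∧ n = 0 := by
  obtain rfl | hn := eq_or_ne n 0
  · exact ⟨by exact_mod_cast (by simpa using h : (m : ℝ) = 0), rfl⟩
  · have hnx : (n : ℝ) * x = ((-m : ℤ) : ℝ) := by push_cast; linarith
    exact (Int.not_irrational (-m) (hnx ▸ hx.intCast_mul hn)).elim

/-- There is no strongly regular graph with `k = 50`, `λ = 7`, `μ = 2`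
(the non-principal eigenvalues would be roots of `x² - 5x - 48 = 0`, which
are irrational, and the conference-graph condition `λ = μ - 1` fails). -/
theorem stmt_4 {V : Type*} [Fintype V] [Nonempty V]
    (G : SimpleGraph V) [DecidableRel G.Adj] (v : ℕ) :
    ¬ G.IsSRGWith v 50 7 2 := by
  classical
  intro h
  have hroot (θ : ℂ) (hθ : (G.adjMatrix ℂ).charpoly.IsRoot θ) :
      θ = 50 ∨ θ = ((5 + √217) / 2 : ℝ) ∨ θ = ((5 - √217) / 2 : ℝ) := by
    have := h.eq_or_eq_or_eq_of_isRoot_charpoly (by norm_num) hθ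
    norm_num at this ⊢
    exact this
  set t : ℝ := √217
  have ht : Irrational t := by
    exact_mod_cast (irrational_sqrt_natCast_iff (n := 217)).mpr (by decide +kernel)
  have ht_pos : 0 < t := by positivity
  have ht_lt : t < 15 := by nlinarith [Real.mul_self_sqrt (show (0 : ℝ) ≤ 217 by norm_num)]
  obtain ⟨a, b, c, hcard, htrace⟩ :=
    (G.adjMatrix ℂ).exists_card_eq_add_and_trace_eq_of_isRoot_charpoly
      (by exact_mod_cast (by linarith : (5 + t) / 2 < (50 : ℝ)).ne')
      (by exact_mod_cast (by linarith : (5 - t) / 2 < (50 : ℝ)).ne')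
      (by exact_mod_cast (by linarith : (5 - t) / 2 < (5 + t) / 2).ne') hroot
  rw [SimpleGraph.trace_adjMatrix] at htrace
  have hlin : ((100 * a + 5 * b + 5 * c : ℤ) : ℝ) + ((b - c : ℤ) : ℝ) * t = 0 := by
    have : (((100 * a + 5 * b + 5 * c : ℤ) : ℝ) + ((b - c : ℤ) : ℝ) * t : ℂ) = 0 := by
      push_cast at htrace ⊢
      linear_combination -2 * htrace
    exact_mod_cast this
  have habc := (ht.eq_zero_of_intCast_add_intCast_mul_eq_zero hlin).1
  have hV := Fintype.card_pos (α := V)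
  omega
end

section
/- Any strongly regular graph with λ = 0 and μ = 1 (a Moore graph of diameter 2) has degree k ∈ {2, 3, 7, 57}. -/
/-!
Let `A` be the adjacency matrix of a Moore graph of degree `k` on `k² + 1` vertices. Then
`A² + A - (k - 1) = J` and `A J = k J`, so every eigenvalue of `A` is `k` or a root
`(-1 ± √(4k - 3)) / 2` of `x² + x - (k - 1)`. Comparing `tr (A² + A - (k - 1)) = tr J` with
the eigenvalues shows that `k` is a simple eigenvalue, and then `tr A = 0` gives
`(m₊ - m₋) √(4k - 3) = k² - 2k` for the multiplicities `m₊, m₋` of the other two. Either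
`m₊ = m₋` and `k = 2`, or `4k - 3 = t²` is a perfect square and `t ∣ k² - 2k` forces `t ∣ 15`,
i.e. `k ∈ {1, 3, 7, 57}`.
-/

open Matrix Polynomial Finset

namespace Matrix.IsHermitian

variable {𝕜 n : Type*} [RCLike 𝕜] [Fintype n] [DecidableEq n] {A : Matrix n n 𝕜}

theorem trace_cfc (hA : A.IsHermitian) (f : ℝ → ℝ) :
    (cfc f A).trace = ∑ i, (f (hA.eigenvalues i) : 𝕜) := by
  rw [hA.cfc_eq, IsHermitian.cfc, Unitary.conjStarAlgAut_apply, trace_mul_cycle,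
    Unitary.coe_star_mul_self, one_mul, trace_diagonal]
  rfl

theorem trace_aeval (hA : A.IsHermitian) (p : ℝ[X]) :
    (aeval A p).trace = ∑ i, ((p.eval (hA.eigenvalues i) : ℝ) : 𝕜) := by
  rw [← cfc_polynomial p A hA.isSelfAdjoint, hA.trace_cfc]

theorem eval_eigenvalues_eq_zero (hA : A.IsHermitian) {p : ℝ[X]} (hp : aeval A p = 0) (i : n) :
    p.eval (hA.eigenvalues i) = 0 := by
  have : Nonempty n := ⟨i⟩
  simpa [hp] using
    spectrum.subset_polynomial_aeval A p ⟨_, hA.eigenvalues_mem_spectrum_real i, rfl⟩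

end Matrix.IsHermitian

namespace SimpleGraph

variable {V : Type*} [Fintype V] {G : SimpleGraph V} [DecidableRel G.Adj] {n k ℓ μ : ℕ}
  {α : Type*}

theorem IsRegularOfDegree.adjMatrix_mul_of_one [NonAssocSemiring α] (h : G.IsRegularOfDegree k) :
    G.adjMatrix α * of 1 = (k : α) • of 1 := by
  ext v w
  simp [adjMatrix_mul_apply, h v]

theorem IsSRGWith.aeval_adjMatrix_quadratic [DecidableEq V] [CommRing α]
    (h : G.IsSRGWith n k ℓ μ) :
    aeval (G.adjMatrix α) (X ^ 2 - C ((ℓ : α) - μ) * X - C ((k : α) - μ)) = (μ : α) • of 1 := by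
  have hcompl : Gᶜ.adjMatrix α = of 1 - 1 - G.adjMatrix α := by
    rw [← adjMatrix_completeGraph_eq_of_one_sub_one,
      ← IsCompl.adjMatrix_add_adjMatrix_eq_adjMatrix_completeGraph α (H := Gᶜ) isCompl_compl,
      add_sub_cancel_left]
  simp only [map_sub, map_mul, map_pow, aeval_X, aeval_C, h.matrix_eq, hcompl,
    Algebra.algebraMap_eq_smul_one, sub_mul, smul_mul_assoc, one_mul]
  module

theorem IsSRGWith.aeval_adjMatrix_eq_zero_s11 [DecidableEq V] [CommRing α]
    (h : G.IsSRGWith n k ℓ μ) :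
    aeval (G.adjMatrix α)
      ((X - C (k : α)) * (X ^ 2 - C ((ℓ : α) - μ) * X - C ((k : α) - μ))) = 0 := by
  rw [aeval_mul, h.aeval_adjMatrix_quadratic, mul_smul_comm, map_sub, aeval_X, aeval_C,
    Algebra.algebraMap_eq_smul_one, sub_mul, h.regular.adjMatrix_mul_of_one, smul_mul_assoc,
    one_mul, sub_self, smul_zero]

theorem IsSRGWith.two_le_of_not_adj (h : G.IsSRGWith n k ℓ μ) (hμ : 0 < μ) {u w : V}
    (hne : u ≠ w) (hna : ¬G.Adj u w) : 2 ≤ k := by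
  classical
  obtain ⟨z, hzu, hzw⟩ : ∃ z, G.Adj u z ∧ G.Adj w z := by
    obtain ⟨⟨z, hzu, hzw⟩⟩ := Fintype.card_pos_iff.mp (h.of_not_adj hne hna ▸ hμ)
    exact ⟨z, hzu, hzw⟩
  calc 2 = #{u, w} := (card_pair hne).symm
    _ ≤ #(G.neighborFinset z) := card_le_card (by simp [insert_subset_iff, hzu.symm, hzw.symm])
    _ = k := h.regular z

theorem IsSRGWith.card_eq_sq_add_one (h : G.IsSRGWith n k 0 1) (hn : 0 < n) (hk : 2 ≤ k) :
    n = k ^ 2 + 1 := by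
  have hparam := IsSRGWith.param_eq G h hn
  rw [tsub_zero, mul_one] at hparam
  have : 2 ≤ k * (k - 1) := Nat.mul_le_mul hk (by omega : 1 ≤ k - 1)
  zify [(by omega : k ≤ n), (by omega : 1 ≤ n - k), (by omega : 1 ≤ k)] at hparam
  have : (n : ℤ) = k ^ 2 + 1 := by linear_combination -hparam
  exact_mod_cast this

end SimpleGraph

theorem eq_one_or_three_or_seven_or_fiftySeven_of_dvd {k t : ℕ} (ht : t ^ 2 + 3 = 4 * k)
    (hdvd : (t : ℤ) ∣ (k : ℤ) ^ 2 - 2 * k) : k = 1 ∨ k = 3 ∨ k = 7 ∨ k = 57 := by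
  have h15 : t ∣ 15 := by
    have hk : (4 * k : ℤ) = t ^ 2 + 3 := by exact_mod_cast ht.symm
    have : (t : ℤ) ∣ t * (t ^ 3 - 2 * t) - 16 * (k ^ 2 - 2 * k) :=
      dvd_sub (dvd_mul_right _ _) (dvd_mul_of_dvd_right hdvd _)
    -- `16 (k² - 2k) = (t² + 3)² - 8 (t² + 3) = t⁴ - 2t² - 15`
    have h : (t : ℤ) * (t ^ 3 - 2 * t) - 16 * (k ^ 2 - 2 * k) = 15 := by
      linear_combination (-(4 * k : ℤ) - t ^ 2 + 5) * hk
    exact_mod_cast h ▸ this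
  have hdiv : Nat.divisors 15 = {1, 3, 5, 15} := by decide
  have : t ∈ Nat.divisors 15 := Nat.mem_divisors.mpr ⟨h15, by norm_num⟩
  simp only [hdiv, mem_insert, mem_singleton] at this
  rcases this with rfl | rfl | rfl | rfl <;> omega

theorem exists_sum_eq_intCast_mul_sqrt {ι : Type*} (s : Finset ι) {y : ι → ℝ} {r : ℝ}
    (hy : ∀ i ∈ s, y i ^ 2 = r) : ∃ d : ℤ, ∑ i ∈ s, y i = d * √r := by
  refine ⟨∑ i ∈ s, (SignType.sign (y i) : ℤ), ?_⟩
  push_cast [SignType.intCast_cast, sum_mul]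
  refine sum_congr rfl fun i hi => ?_
  rw [← hy i hi, Real.sqrt_sq_eq_abs, sign_mul_abs]

theorem moore_degree_of_int_mul_sqrt {k : ℕ} (hk : 2 ≤ k) {d : ℤ}
    (h : d * √(4 * k - 3) = k ^ 2 - 2 * k) : k = 2 ∨ k = 3 ∨ k = 7 ∨ k = 57 := by
  rcases eq_or_ne d 0 with rfl | hd
  · left
    have : (k : ℝ) * (k - 2) = 0 := by linear_combination -h
    have : (k : ℝ) = 2 := by simpa [sub_eq_zero, (by positivity : (k : ℝ) ≠ 0)] using this
    exact_mod_cast this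
  have hcast : ((4 * k - 3 : ℕ) : ℝ) = 4 * k - 3 := by push_cast [(by omega : 3 ≤ 4 * k)]; ring
  obtain ⟨t, ht⟩ : IsSquare (4 * k - 3) := by
    by_contra hns
    refine Int.not_irrational (k ^ 2 - 2 * k) ?_
    have := (irrational_sqrt_natCast_iff.mpr hns).intCast_mul hd
    rw [hcast, h] at this
    exact_mod_cast this
  rw [← hcast, ht, Nat.cast_mul, Real.sqrt_mul_self (Nat.cast_nonneg t)] at h
  have ht' : t ^ 2 + 3 = 4 * k := by rw [sq, ← ht]; omega
  have := eq_one_or_three_or_seven_or_fiftySeven_of_dvd ht'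
    ⟨d, by rw [mul_comm (t : ℤ)]; exact_mod_cast h.symm⟩
  omega

theorem moore_degree_of_spectrum {ι : Type*} [Fintype ι] (e : ι → ℝ) {k : ℕ} (hk : 2 ≤ k)
    (hcard : Fintype.card ι = k ^ 2 + 1) (hsum : ∑ i, e i = 0)
    (hquad : ∑ i, (e i ^ 2 + e i - ((k : ℝ) - 1)) = (k : ℝ) ^ 2 + 1)
    (hroot : ∀ i, e i = k ∨ e i ^ 2 + e i - ((k : ℝ) - 1) = 0) :
    k = 2 ∨ k = 3 ∨ k = 7 ∨ k = 57 := by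
  classical
  have hsplit (f : ℝ → ℝ) :
      ∑ i, f (e i) = #{i | e i = k} * f k + ∑ i with e i ≠ k, f (e i) := by
    rw [← sum_filter_add_sum_filter_not univ (fun i => e i = k),
      sum_congr rfl fun i hi => by rw [(mem_filter.1 hi).2], sum_const, nsmul_eq_mul]
  have hone : #{i | e i = k} = 1 := by
    have := hsplit fun x => x ^ 2 + x - (k - 1)
    rw [hquad, sum_eq_zero fun i hi => (hroot i).resolve_left (mem_filter.1 hi).2] at this
    have : ((#{i | e i = k} : ℕ) : ℝ) = 1 := by nlinarith
    exact_mod_cast this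
  have hrest : ∑ i with e i ≠ k, (2 * e i + 1) = (k : ℝ) ^ 2 - 2 * k := by
    have := hsplit fun x => 2 * x + 1
    rw [sum_add_distrib, ← mul_sum, hsum, sum_const, card_univ, hcard, hone, nsmul_eq_mul] at this
    push_cast at this
    linarith
  obtain ⟨d, hd⟩ := exists_sum_eq_intCast_mul_sqrt {i | e i ≠ k} (y := fun i => 2 * e i + 1)
    (r := 4 * k - 3) fun i hi => by
      linear_combination 4 * (hroot i).resolve_left (mem_filter.1 hi).2
  exact moore_degree_of_int_mul_sqrt hk (hd ▸ hrest)

/-- Any (noncomplete) strongly regular graph with `λ = 0` and `μ = 1`, i.e.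
a Moore graph of diameter 2, has degree `k ∈ {2, 3, 7, 57}`. -/
theorem stmt_11 {V : Type*} [Fintype V] (G : SimpleGraph V) [DecidableRel G.Adj]
    (v k : ℕ) (hsrg : G.IsSRGWith v k 0 1)
    (hnc : ∃ u w : V, u ≠ w ∧ ¬G.Adj u w) :
    k = 2 ∨ k = 3 ∨ k = 7 ∨ k = 57 := by
  classical
  obtain ⟨u, w, huw, hna⟩ := hnc
  have hk : 2 ≤ k := hsrg.two_le_of_not_adj one_pos huw hna
  have hv : v = k ^ 2 + 1 := hsrg.card_eq_sq_add_one (hsrg.card ▸ Fintype.card_pos_iff.2 ⟨u⟩) hk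
  have hA := G.isHermitian_adjMatrix ℝ
  refine moore_degree_of_spectrum hA.eigenvalues hk (hsrg.card.trans hv) ?_ ?_ fun i => ?_
  · simpa [SimpleGraph.trace_adjMatrix] using hA.trace_eq_sum_eigenvalues.symm
  · have := congrArg trace (hsrg.aeval_adjMatrix_quadratic (α := ℝ))
    rw [hA.trace_aeval] at this
    simpa [Matrix.trace, sum_sub_distrib, hsrg.card, hv] using this
  · have := hA.eval_eigenvalues_eq_zero hsrg.aeval_adjMatrix_eq_zero_s11 i
    rw [eval_mul, mul_eq_zero, eval_sub, eval_X, eval_C, sub_eq_zero] at this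
    exact this.imp_right fun h => by simpa using h
end

section
/- Let Γ be a connected graph such that every two vertices at distance 2 have exactly μ > 1 common neighbours and every μ-graph is a clique (Γ is a Terwilliger graph with μ(Γ) > 1). Then for each vertex u, the local graph Γ₁(u) has diameter 2 and every two vertices of Γ₁(u) at distance 2 within Γ₁(u) have exactly μ − 1 common neighbours inside Γ₁(u), all pairwise adjacent; i.e., Γ₁(u) is a Terwilliger graph with μ(Γ₁(u)) = μ − 1. -/
/-! The common neighbourhood `S` of two nonadjacent neighbours `y, z` of `u` is a
`μ`-graph containing `u`; since it is a clique, the common neighbours of `u, y, z`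
are exactly `S \ {u}`, a clique with `μ - 1 ≥ 1` vertices. -/

namespace SimpleGraph

variable {V : Type*} [Fintype V] [DecidableEq V] {G : SimpleGraph V} [DecidableRel G.Adj]

theorem neighborFinset_inter_eq_erase_of_isClique {s : Finset V} {u : V}
    (hs : G.IsClique (s : Set V)) (hu : u ∈ s) :
    G.neighborFinset u ∩ s = s.erase u := by
  ext a
  simp only [Finset.mem_inter, Finset.mem_erase, mem_neighborFinset]
  exact ⟨fun ⟨hua, ha⟩ => ⟨hua.ne.symm, ha⟩,
    fun ⟨hau, ha⟩ => ⟨hs hu ha hau.symm, ha⟩⟩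

end SimpleGraph

theorem stmt_12_general {V : Type*} [Fintype V] [DecidableEq V]
    (G : SimpleGraph V) [DecidableRel G.Adj]
    (mu : ℕ) (hmu : 1 < mu)
    (hamu : ∀ u w : V, u ≠ w → ¬G.Adj u w →
      (G.neighborFinset u ∩ G.neighborFinset w).Nonempty →
      (G.neighborFinset u ∩ G.neighborFinset w).card = mu)
    (hclq : ∀ u w : V, u ≠ w → ¬G.Adj u w →
      ∀ a ∈ G.neighborFinset u ∩ G.neighborFinset w,
        ∀ b ∈ G.neighborFinset u ∩ G.neighborFinset w, a ≠ b → G.Adj a b) :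
    ∀ u y z : V, G.Adj u y → G.Adj u z → y ≠ z → ¬G.Adj y z →
      ((G.neighborFinset u ∩ G.neighborFinset y ∩ G.neighborFinset z).Nonempty ∧
       (G.neighborFinset u ∩ G.neighborFinset y ∩ G.neighborFinset z).card
          = mu - 1 ∧
       ∀ a ∈ G.neighborFinset u ∩ G.neighborFinset y ∩ G.neighborFinset z,
         ∀ b ∈ G.neighborFinset u ∩ G.neighborFinset y ∩ G.neighborFinset z,
           a ≠ b → G.Adj a b) := by
  intro u y z huy huz hyz hnyz
  set S := G.neighborFinset y ∩ G.neighborFinset z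
  have huS : u ∈ S := by simpa [S] using ⟨huy.symm, huz.symm⟩
  have hS_clique : G.IsClique (S : Set V) := fun a ha b hb => hclq y z hyz hnyz a ha b hb
  have hS_card : S.card = mu := hamu y z hyz hnyz ⟨u, huS⟩
  have hlocal : G.neighborFinset u ∩ G.neighborFinset y ∩ G.neighborFinset z = S.erase u := by
    rw [Finset.inter_assoc, SimpleGraph.neighborFinset_inter_eq_erase_of_isClique hS_clique huS]
  have hcard : (S.erase u).card = mu - 1 := by rw [Finset.card_erase_of_mem huS, hS_card]
  rw [hlocal]
  refine ⟨Finset.card_pos.mp (by omega), hcard, ?_⟩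
  exact fun a ha b hb => hS_clique (Finset.mem_of_mem_erase ha) (Finset.mem_of_mem_erase hb)

/-- If `Γ` is a Terwilliger graph with `μ(Γ) = μ > 1` (connected, every two
vertices at distance 2 have exactly `μ` common neighbours which are pairwise
adjacent), then for each vertex `u` the local graph `Γ₁(u)` is a Terwilliger
graph of diameter 2 with `μ(Γ₁(u)) = μ - 1`: any two distinct nonadjacent
neighbours `y, z` of `u` have exactly `μ - 1` common neighbours inside
`Γ₁(u)`, these are pairwise adjacent, and there is at least one (so `y` and
`z` are at distance 2 in `Γ₁(u)`, giving diameter 2). -/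
theorem stmt_12 {V : Type*} [Fintype V] [DecidableEq V]
    (G : SimpleGraph V) [DecidableRel G.Adj]
    (hconn : G.Connected) (mu : ℕ) (hmu : 1 < mu)
    (hamu : ∀ u w : V, u ≠ w → ¬G.Adj u w →
      (G.neighborFinset u ∩ G.neighborFinset w).Nonempty →
      (G.neighborFinset u ∩ G.neighborFinset w).card = mu)
    (hclq : ∀ u w : V, u ≠ w → ¬G.Adj u w →
      ∀ a ∈ G.neighborFinset u ∩ G.neighborFinset w,
        ∀ b ∈ G.neighborFinset u ∩ G.neighborFinset w, a ≠ b → G.Adj a b) :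
    ∀ u y z : V, G.Adj u y → G.Adj u z → y ≠ z → ¬G.Adj y z →
      ((G.neighborFinset u ∩ G.neighborFinset y ∩ G.neighborFinset z).Nonempty ∧
       (G.neighborFinset u ∩ G.neighborFinset y ∩ G.neighborFinset z).card
          = mu - 1 ∧
       ∀ a ∈ G.neighborFinset u ∩ G.neighborFinset y ∩ G.neighborFinset z,
         ∀ b ∈ G.neighborFinset u ∩ G.neighborFinset y ∩ G.neighborFinset z,
           a ≠ b → G.Adj a b) :=
  stmt_12_general G mu hmu hamu hclq
end
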